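/- Let V be a finite set of unit vectors in ℝⁿ such that for all distinct v,w ∈ V, |⟨v,w⟩| ∈ {0, α} for a fixed real α with 0 < α < 1. Then |V| ≤ binom(n+2,3). -/

import Mathlib

/-!
For `v ∈ V` the cubic form `x ↦ ⟪v, x⟫ (⟪v, x⟫² - α² ‖x‖²)` vanishes at every other `w ∈ V`
and equals `1 - α² ≠ 0` at `v`. These `|V|` forms are therefore linearly independent in the
space of homogeneous cubic forms on `ℝⁿ`, which is spanned by the `(n + 2).choose 3` cubic
monomials.
-/

open scoped InnerProductSpace

open Module

theorem linearIndependent_of_apply_eq_zero_of_ne {ι X K : Type*} [Ring K] [NoZeroDivisors K]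
    {f : ι → X → K} (p : ι → X) (hdiag : ∀ i, f i (p i) ≠ 0)
    (hoff : ∀ i j, i ≠ j → f i (p j) = 0) : LinearIndependent K f := by
  classical
  rw [linearIndependent_iff']
  intro s g hsum j hj
  have hsum_j := congrFun hsum (p j)
  simp only [Finset.sum_apply, Pi.smul_apply, smul_eq_mul, Pi.zero_apply] at hsum_j
  rw [Finset.sum_eq_single j (fun i _ hij => by rw [hoff i j hij, mul_zero])
    (absurd hj)] at hsum_j
  exact (mul_eq_zero.mp hsum_j).resolve_right (hdiag j)

section HomogeneousForms

variable (K E : Type*) [Field K] [AddCommGroup E] [Module K E]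

/-- The homogeneous polynomial functions of degree `d` on `E`. -/
def homogeneousForms (d : ℕ) : Submodule K (E → K) :=
  Submodule.span K (Set.range fun ℓ : Fin d → Dual K E => fun x => ∏ k, ℓ k x)

variable {K E}

theorem prod_mem_homogeneousForms {d : ℕ} (ℓ : Fin d → Dual K E) :
    (fun x => ∏ k, ℓ k x) ∈ homogeneousForms K E d :=
  Submodule.subset_span ⟨ℓ, rfl⟩

noncomputable def Module.Basis.symMonomial {ι : Type*} (b : Basis ι K E) {d : ℕ} (s : Sym ι d)
    (x : E) : K :=
  ((s : Multiset ι).map fun i => b.repr x i).prod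

theorem Module.Basis.prod_dual_apply_eq_sum_symMonomial {ι : Type*} [Fintype ι] (b : Basis ι K E)
    {d : ℕ} (ℓ : Fin d → Dual K E) :
    (fun x => ∏ k, ℓ k x) = ∑ f : Fin d → ι,
      (∏ k, ℓ k (b (f k))) •
        b.symMonomial (Sym.mk (Finset.univ.val.map f) (by simp) : Sym ι d) := by
  classical
  funext x
  have hℓ : ∀ k, ℓ k x = ∑ i, b.repr x i * ℓ k (b i) := fun k => by
    conv_lhs => rw [← b.sum_repr x]
    simp only [map_sum, map_smul, smul_eq_mul]
  simp only [hℓ, Fintype.prod_sum, Finset.sum_apply, Pi.smul_apply, smul_eq_mul,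
    Module.Basis.symMonomial, Sym.coe_mk, Multiset.map_map]
  refine Finset.sum_congr rfl fun f _ => ?_
  rw [Finset.prod_mul_distrib, mul_comm]
  rfl

theorem homogeneousForms_le_span_symMonomial {ι : Type*} [Fintype ι] (b : Basis ι K E) (d : ℕ) :
    homogeneousForms K E d ≤ Submodule.span K (Set.range (b.symMonomial (d := d))) := by
  refine Submodule.span_le.2 ?_
  rintro _ ⟨ℓ, rfl⟩
  change (fun x => ∏ k, ℓ k x) ∈ _
  rw [b.prod_dual_apply_eq_sum_symMonomial ℓ]
  exact Submodule.sum_mem _ fun f _ =>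
    Submodule.smul_mem _ _ (Submodule.subset_span (Set.mem_range_self _))

instance [FiniteDimensional K E] (d : ℕ) : FiniteDimensional K (homogeneousForms K E d) :=
  have := FiniteDimensional.span_of_finite K
    (Set.finite_range ((Module.finBasis K E).symMonomial (d := d)))
  Submodule.finiteDimensional_of_le (homogeneousForms_le_span_symMonomial (Module.finBasis K E) d)

theorem finrank_homogeneousForms_le [FiniteDimensional K E] (d : ℕ) :
    finrank K (homogeneousForms K E d) ≤ (finrank K E + d - 1).choose d := by
  let b := Module.finBasis K E
  have := FiniteDimensional.span_of_finite K (Set.finite_range (b.symMonomial (d := d)))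
  calc finrank K (homogeneousForms K E d)
      ≤ finrank K (Submodule.span K (Set.range (b.symMonomial (d := d)))) :=
        Submodule.finrank_mono (homogeneousForms_le_span_symMonomial b d)
    _ ≤ Fintype.card (Sym (Fin (finrank K E)) d) := finrank_range_le_card _
    _ = (finrank K E + d - 1).choose d := by rw [Sym.card_sym_eq_choose, Fintype.card_fin]

end HomogeneousForms

section InnerProduct

variable {E : Type*} [NormedAddCommGroup E] [InnerProductSpace ℝ E]

theorem inner_mul_inner_mul_inner_mem_homogeneousForms (u v w : E) :
    (fun x : E => ⟪u, x⟫_ℝ * ⟪v, x⟫_ℝ * ⟪w, x⟫_ℝ) ∈ homogeneousForms ℝ E 3 := by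
  convert prod_mem_homogeneousForms ![innerₗ E u, innerₗ E v, innerₗ E w] using 1
  funext x
  simp [Fin.prod_univ_three]

def angleCubic (α : ℝ) (v x : E) : ℝ := ⟪v, x⟫_ℝ * (⟪v, x⟫_ℝ ^ 2 - α ^ 2 * ‖x‖ ^ 2)

theorem angleCubic_mem_homogeneousForms [FiniteDimensional ℝ E] (α : ℝ) (v : E) :
    angleCubic α v ∈ homogeneousForms ℝ E 3 := by
  let b := stdOrthonormalBasis ℝ E
  have hcubic : angleCubic α v = (fun x : E => ⟪v, x⟫_ℝ * ⟪v, x⟫_ℝ * ⟪v, x⟫_ℝ) -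
      α ^ 2 • ∑ i, fun x : E => ⟪b i, x⟫_ℝ * ⟪b i, x⟫_ℝ * ⟪v, x⟫_ℝ := by
    funext x
    have hnorm : ‖x‖ ^ 2 = ∑ i, ⟪b i, x⟫_ℝ * ⟪b i, x⟫_ℝ := by
      rw [← real_inner_self_eq_norm_sq, ← b.sum_inner_mul_inner x x]
      simp only [real_inner_comm x]
    simp only [angleCubic, hnorm, Pi.sub_apply, Pi.smul_apply, Finset.sum_apply, smul_eq_mul,
      ← Finset.sum_mul]
    ring
  rw [hcubic]
  exact Submodule.sub_mem _ (inner_mul_inner_mul_inner_mem_homogeneousForms v v v)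
    (Submodule.smul_mem _ _ (Submodule.sum_mem _ fun i _ =>
      inner_mul_inner_mul_inner_mem_homogeneousForms (b i) (b i) v))

theorem angleCubic_self (α : ℝ) {v : E} (hv : ‖v‖ = 1) : angleCubic α v v = 1 - α ^ 2 := by
  simp [angleCubic, hv]

theorem angleCubic_eq_zero {α : ℝ} {v x : E} (hx : ‖x‖ = 1)
    (h : |⟪v, x⟫_ℝ| = 0 ∨ |⟪v, x⟫_ℝ| = α) : angleCubic α v x = 0 := by
  rcases h with h | h
  · simp [angleCubic, abs_eq_zero.mp h]
  · rw [angleCubic, hx, ← sq_abs, h]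
    ring

end InnerProduct

theorem stmt_5 {n : ℕ} (α : ℝ) (hα : 0 < α) (hα1 : α < 1)
    (V : Finset (EuclideanSpace ℝ (Fin n)))
    (hunit : ∀ v ∈ V, ‖v‖ = 1)
    (hangle : ∀ v ∈ V, ∀ w ∈ V, v ≠ w →
      |⟪v, w⟫_ℝ| = 0 ∨ |⟪v, w⟫_ℝ| = α) :
    V.card ≤ Nat.choose (n + 2) 3 := by
  let cubic : V → homogeneousForms ℝ (EuclideanSpace ℝ (Fin n)) 3 := fun v =>
    ⟨angleCubic α (v : EuclideanSpace ℝ (Fin n)), angleCubic_mem_homogeneousForms α _⟩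
  have hα2 : 1 - α ^ 2 ≠ 0 := by nlinarith
  have hindep : LinearIndependent ℝ cubic := by
    refine LinearIndependent.of_comp (Submodule.subtype _) ?_
    refine linearIndependent_of_apply_eq_zero_of_ne (fun v : V => (v : EuclideanSpace ℝ (Fin n)))
      (fun v => by simpa [cubic, angleCubic_self α (hunit v v.2)] using hα2) fun v w hvw => ?_
    exact angleCubic_eq_zero (hunit w w.2) (hangle v v.2 w w.2 (Subtype.coe_ne_coe.2 hvw))
  calc V.card = Fintype.card V := (Fintype.card_coe V).symm
    _ ≤ finrank ℝ (homogeneousForms ℝ (EuclideanSpace ℝ (Fin n)) 3) :=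
      hindep.fintype_card_le_finrank
    _ ≤ (n + 2).choose 3 := by
      simpa using finrank_homogeneousForms_le (K := ℝ) (E := EuclideanSpace ℝ (Fin n)) 3
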